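/- arXiv:1305.6021 — 2 statements merged into one kernel-verified Lean document; each statement's English description precedes it below -/
import Mathlib

section
/- With the setup of the previous construction (v sorted positive with ‖v‖₁ ≤ C, v(1) ≤ C/k, n > k, and g₀,…,g_k defined via λ_j), each vector g_t satisfies ‖g_t‖₁ = ‖v‖₁ and ‖g_t‖_∞ ≤ C/k, and each g_t has at most n−1 nonzero components. -/
noncomputable def eta (k : ℕ) (C : ℝ) (v : ℕ → ℝ) (j : ℕ) : ℝ := C / k - v j

noncomputable def lam (k : ℕ) (C : ℝ) (v : ℕ → ℝ) (j : ℕ) : ℝ :=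
  eta k C v j / ∑ i ∈ Finset.range k, eta k C v i

noncomputable def g (n k : ℕ) (C : ℝ) (v : ℕ → ℝ) (t : ℕ) (i : ℕ) : ℝ :=
  if i < k then
    (if i + 1 = t then 0 else v i + lam k C v i * v (n - 1))
  else if i = n - 1 then
    (if t = 0 then 0 else v (t - 1) + lam k C v (t - 1) * v (n - 1))
  else v i

/-! `g_t` is `g_0` with the coordinates `t - 1` and `n - 1` swapped, so everything reduces to
`g_0`. Since `v (n - 1) ≤ Σ_{i<k} η_i = C - Σ_{i<k} v i`, each `λ_j v (n - 1) ≤ η_j`, which keeps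
the entries `v j + λ_j v (n - 1)` of `g_0` below `v j + η_j = C / k`; and since `Σ λ_j = 1`, the
mass `v (n - 1)` taken from the last coordinate is exactly redistributed over the first `k`. -/

open Finset

section
variable {n k : ℕ} {C : ℝ} {v : ℕ → ℝ}

lemma sum_eta_eq (hk : k ≠ 0) : ∑ i ∈ range k, eta k C v i = C - ∑ i ∈ range k, v i := by
  simp only [eta, sum_sub_distrib, sum_const, card_range, nsmul_eq_mul]
  field_simp

lemma sum_range_add_apply_pred_le (hkn : k < n) (hv0 : ∀ i < n, 0 ≤ v i) :
    ∑ i ∈ range k, v i + v (n - 1) ≤ ∑ i ∈ range n, v i := by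
  have hlast : n - 1 ∉ range k := by simp only [mem_range]; omega
  rw [add_comm, ← sum_insert hlast]
  refine sum_le_sum_of_subset_of_nonneg (fun i hi => ?_) fun i hi _ => hv0 i (mem_range.1 hi)
  rw [mem_insert, mem_range] at hi
  simp only [mem_range]
  omega

lemma apply_pred_le_sum_eta (hk : k ≠ 0) (hkn : k < n) (hv0 : ∀ i < n, 0 ≤ v i)
    (hsum : ∑ i ∈ range n, v i ≤ C) : v (n - 1) ≤ ∑ i ∈ range k, eta k C v i := by
  rw [sum_eta_eq hk]
  linarith [sum_range_add_apply_pred_le hkn hv0]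

lemma sum_lam_eq_one (hD : ∑ i ∈ range k, eta k C v i ≠ 0) : ∑ i ∈ range k, lam k C v i = 1 := by
  simp only [lam, ← sum_div]
  exact div_self hD

lemma lam_mul_le_eta {j : ℕ} {x : ℝ} (hj : 0 ≤ eta k C v j) (hx : 0 ≤ x)
    (hxD : x ≤ ∑ i ∈ range k, eta k C v i) : lam k C v j * x ≤ eta k C v j := by
  calc lam k C v j * x = eta k C v j * (x / ∑ i ∈ range k, eta k C v i) := by
        rw [lam, mul_div_assoc', div_mul_eq_mul_div]
    _ ≤ eta k C v j * 1 := by gcongr; exact div_le_one_of_le₀ hxD (hx.trans hxD)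
    _ = eta k C v j := mul_one _

lemma g_zero_apply_last (hkn : k < n) : g n k C v 0 (n - 1) = 0 := by
  simp [g, show ¬ n - 1 < k by omega]

lemma g_zero_mem_Icc (hk : k ≠ 0) (hkn : k < n) (hv0 : ∀ i < n, 0 ≤ v i)
    (hvC : ∀ i < n, v i ≤ C / k) (hsum : ∑ i ∈ range n, v i ≤ C) :
    ∀ i < n, g n k C v 0 i ∈ Set.Icc 0 (C / k) := by
  have hlast := apply_pred_le_sum_eta hk hkn hv0 hsum
  have hv_last : 0 ≤ v (n - 1) := hv0 _ (by omega)
  intro i hi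
  by_cases hik : i < k
  · have heta : 0 ≤ eta k C v i := sub_nonneg.2 (hvC i hi)
    have hlam : 0 ≤ lam k C v i := div_nonneg heta (hv_last.trans hlast)
    have hbound := lam_mul_le_eta heta hv_last hlast
    simp only [g, hik, if_true, Nat.add_one_ne_zero, if_false, eta] at hbound ⊢
    exact ⟨add_nonneg (hv0 i hi) (mul_nonneg hlam hv_last), by linarith⟩
  · by_cases hi_last : i = n - 1
    · rw [hi_last, g_zero_apply_last hkn]
      exact ⟨le_rfl, (hv0 i hi).trans (hvC i hi)⟩
    · simp only [g, hik, hi_last, if_false]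
      exact ⟨hv0 i hi, hvC i hi⟩

lemma sum_range_eq_sum_range_add_sum_Ico_add_last {M : Type*} [AddCommMonoid M] (f : ℕ → M)
    (hkn : k < n) : ∑ i ∈ range n, f i = ∑ i ∈ range k, f i + ∑ i ∈ Ico k (n - 1), f i + f (n - 1) := by
  rw [sum_range_add_sum_Ico f (by omega), ← sum_range_succ, Nat.sub_add_cancel (by omega)]

lemma sum_g_zero (hkn : k < n) (hlam : ∑ i ∈ range k, lam k C v i = 1) :
    ∑ i ∈ range n, g n k C v 0 i = ∑ i ∈ range n, v i := by
  have h_head : ∑ i ∈ range k, g n k C v 0 i = ∑ i ∈ range k, v i + v (n - 1) := by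
    rw [← one_mul (v (n - 1)), ← hlam, sum_mul, ← sum_add_distrib]
    exact sum_congr rfl fun i hi => by simp [g, mem_range.1 hi]
  have h_mid : ∑ i ∈ Ico k (n - 1), g n k C v 0 i = ∑ i ∈ Ico k (n - 1), v i :=
    sum_congr rfl fun i hi => by
      have := mem_Ico.1 hi
      simp [g, show ¬ i < k by omega, show i ≠ n - 1 by omega]
  rw [sum_range_eq_sum_range_add_sum_Ico_add_last _ hkn, h_head, h_mid, g_zero_apply_last hkn,
    sum_range_eq_sum_range_add_sum_Ico_add_last _ hkn]
  abel

lemma exists_g_eq_g_zero_comp_swap {t : ℕ} (hkn : k < n) (ht : t ≤ k) :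
    ∃ a < n, ∀ i, g n k C v t i = g n k C v 0 (Equiv.swap a (n - 1) i) := by
  rcases Nat.eq_zero_or_pos t with rfl | ht0
  · exact ⟨n - 1, by omega, fun i => by rw [Equiv.swap_self, Equiv.refl_apply]⟩
  refine ⟨t - 1, by omega, fun i => ?_⟩
  rcases eq_or_ne i (t - 1) with rfl | hi₁
  · rw [Equiv.swap_apply_left, g_zero_apply_last hkn]
    simp [g, show t - 1 < k by omega, show t - 1 + 1 = t by omega]
  rcases eq_or_ne i (n - 1) with rfl | hi₂
  · rw [Equiv.swap_apply_right]
    simp [g, show ¬ n - 1 < k by omega, show t - 1 < k by omega, ht0.ne']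
  · rw [Equiv.swap_apply_of_ne_of_ne hi₁ hi₂]
    simp [g, show i + 1 ≠ t by omega, hi₂]

end

theorem g_properties_general
    (n k : ℕ) (hk : 0 < k) (hkn : k < n) (C : ℝ)
    (v : ℕ → ℝ)
    (hsort : ∀ i j, i ≤ j → j < n → v j ≤ v i)
    (hpos : ∀ i < n, 0 < v i)
    (hv1 : ∑ i ∈ Finset.range n, |v i| ≤ C)
    (hmax : v 0 ≤ C / k) :
    ∀ t ≤ k,
      (∑ i ∈ Finset.range n, |g n k C v t i| = ∑ i ∈ Finset.range n, |v i|) ∧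
      (∀ i < n, |g n k C v t i| ≤ C / k) ∧
      (∃ s : Finset ℕ, s.card ≤ n - 1 ∧ ∀ i < n, i ∉ s → g n k C v t i = 0) := by
  intro t ht
  have hv0 : ∀ i < n, 0 ≤ v i := fun i hi => (hpos i hi).le
  have hvC : ∀ i < n, v i ≤ C / k := fun i hi => (hsort 0 i i.zero_le hi).trans hmax
  have habs_v : ∑ i ∈ range n, |v i| = ∑ i ∈ range n, v i :=
    sum_congr rfl fun i hi => abs_of_nonneg (hv0 i (mem_range.1 hi))
  have hsum : ∑ i ∈ range n, v i ≤ C := habs_v ▸ hv1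
  have hIcc := g_zero_mem_Icc hk.ne' hkn hv0 hvC hsum
  have hlam : ∑ i ∈ range k, lam k C v i = 1 := sum_lam_eq_one
    ((hpos _ (by omega)).trans_le (apply_pred_le_sum_eta hk.ne' hkn hv0 hsum)).ne'
  obtain ⟨a, ha, hg⟩ := exists_g_eq_g_zero_comp_swap (C := C) (v := v) hkn ht
  have hswap_lt : ∀ i < n, Equiv.swap a (n - 1) i < n := fun i hi => by
    rw [Equiv.swap_apply_def]; split_ifs <;> omega
  refine ⟨?_, fun i hi => ?_, ⟨(range n).erase a, ?_, fun i hi hia => ?_⟩⟩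
  · have hsupp : {i | Equiv.swap a (n - 1) i ≠ i} ⊆ range n := fun i hi => by
      rw [Set.mem_ofPred_eq, Equiv.swap_apply_ne_self_iff] at hi
      simp only [coe_range, Set.mem_Iio]; omega
    simp only [hg]
    rw [Equiv.Perm.sum_comp _ _ (fun i => |g n k C v 0 i|) hsupp, habs_v, ← sum_g_zero hkn hlam]
    exact sum_congr rfl fun i hi => abs_of_nonneg (hIcc i (mem_range.1 hi)).1
  · rw [hg, abs_of_nonneg (hIcc _ (hswap_lt i hi)).1]
    exact (hIcc _ (hswap_lt i hi)).2
  · rw [card_erase_of_mem (mem_range.2 ha), card_range]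
  · obtain rfl : i = a := by_contra fun h => hia (mem_erase.2 ⟨h, mem_range.2 hi⟩)
    rw [hg, Equiv.swap_apply_left, g_zero_apply_last hkn]

/-- Each `g_t` has the same ℓ₁ norm as `v`, satisfies `‖g_t‖_∞ ≤ C/k`, and has at
most `n - 1` nonzero components (among the first `n` coordinates). -/
theorem g_properties
    (n k : ℕ) (hk : 0 < k) (hkn : k < n) (C : ℝ) (hC : 0 < C)
    (v : ℕ → ℝ)
    (hsort : ∀ i j, i ≤ j → j < n → v j ≤ v i)
    (hpos : ∀ i < n, 0 < v i)
    (hv1 : ∑ i ∈ Finset.range n, |v i| ≤ C)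
    (hmax : v 0 ≤ C / k) :
    ∀ t ≤ k,
      (∑ i ∈ Finset.range n, |g n k C v t i| = ∑ i ∈ Finset.range n, |v i|) ∧
      (∀ i < n, |g n k C v t i| ≤ C / k) ∧
      (∃ s : Finset ℕ, s.card ≤ n - 1 ∧ ∀ i < n, i ∉ s → g n k C v t i = 0) :=
  g_properties_general n k hk hkn C v hsort hpos hv1 hmax
end

section
/- Let Φ ∈ ℝ^{n×p} with constants δ_k and θ_{k,k}. Let h ∈ ℝᵖ with Φh = 0, let T be a set of k coordinates containing the k largest-magnitude entries of h, S = T^c, and suppose ‖h_S‖₁ ≤ ‖h_T‖₁. Then (1−δ_k)‖h_T‖₂² ≤ θ_{k,k}‖h_T‖₂². -/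
noncomputable def l2 {m : ℕ} (v : Fin m → ℝ) : ℝ := Real.sqrt (∑ i, (v i)^2)

def Sparse {m : ℕ} (k : ℕ) (v : Fin m → ℝ) : Prop :=
  ∃ s : Finset (Fin m), s.card ≤ k ∧ ∀ i ∉ s, v i = 0

/-!
With `α = ‖h_T‖₁ / k`, the tail `h_S` lies in the polytope `{|x_j| ≤ α, ‖x‖₁ ≤ k α}` supported on
`S`, whose extreme points are `k`-sparse vectors with entries `±α`; so any linear functional is
bounded on `h_S` by its value at such a vector `w`, and `‖w‖₂ ≤ √k α ≤ ‖h_T‖₂` by Cauchy–Schwarz.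
As `Φ h = 0`, `‖Φ h_T‖₂² = -⟨Φ h_T, Φ h_S⟩ ≤ -⟨Φ h_T, Φ w⟩ ≤ θ ‖h_T‖₂ ‖w‖₂ ≤ θ ‖h_T‖₂²`.
-/

open Finset Matrix

section TopSubset

variable {ι : Type*} [DecidableEq ι]

theorem Finset.exists_subset_card_eq_forall_le {α : Type*} [LinearOrder α] (f : ι → α) :
    ∀ {m : ℕ} {S : Finset ι}, m ≤ #S →
      ∃ A ⊆ S, #A = m ∧ ∀ i ∈ A, ∀ j ∈ S \ A, f j ≤ f i
  | 0, _, _ => ⟨∅, empty_subset _, rfl, by simp⟩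
  | m + 1, S, hm => by
    obtain ⟨x, hxS, hx⟩ := S.exists_max_image f (card_pos.mp (by omega))
    obtain ⟨A, hAS, hAcard, hA⟩ :=
      exists_subset_card_eq_forall_le f (m := m) (S := S.erase x)
        (by rw [card_erase_of_mem hxS]; omega)
    have hxA : x ∉ A := fun h => by simpa using hAS h
    refine ⟨insert x A, insert_subset hxS (hAS.trans (erase_subset _ _)),
      by rw [card_insert_of_notMem hxA, hAcard], fun i hi j hj => ?_⟩
    obtain ⟨hjS, hjA⟩ := mem_sdiff.mp hj
    rcases mem_insert.mp hi with rfl | hiA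
    · exact hx j hjS
    · exact hA i hiA j (by simp_all)

/-- Weak duality for the linear program `max ∑ a b` over `0 ≤ b ≤ α`, `∑ b ≤ #A α`:
the threshold `μ` separating the values of `a` on `A` from those on `S \ A` is the dual variable. -/
theorem sum_mul_le_mul_sum_of_threshold {S A : Finset ι} (hAS : A ⊆ S) {a b : ι → ℝ} {α μ : ℝ}
    (hμ : 0 ≤ μ) (hout : ∀ j ∈ S \ A, a j ≤ μ) (hin : ∀ i ∈ A, μ ≤ a i)
    (hb₀ : ∀ j ∈ S, 0 ≤ b j) (hbα : ∀ j ∈ S, b j ≤ α) (hsum : ∑ j ∈ S, b j ≤ #A * α) :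
    ∑ j ∈ S, a j * b j ≤ α * ∑ i ∈ A, a i := by
  have hout_le : ∑ j ∈ S \ A, a j * b j ≤ μ * ∑ j ∈ S \ A, b j := by
    rw [mul_sum]
    exact sum_le_sum fun j hj =>
      mul_le_mul_of_nonneg_right (hout j hj) (hb₀ j (mem_sdiff.mp hj).1)
  have hin_le : ∑ i ∈ A, (a i * b i + μ * (α - b i)) ≤ α * ∑ i ∈ A, a i := by
    rw [mul_sum]
    refine sum_le_sum fun i hi => ?_
    have := mul_le_mul_of_nonneg_right (hin i hi) (sub_nonneg.mpr (hbα i (hAS hi)))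
    linarith
  have hmass : μ * ∑ j ∈ S \ A, b j ≤ μ * (#A * α - ∑ i ∈ A, b i) := by
    gcongr
    linarith [sum_sdiff hAS (f := b)]
  have hexpand : ∑ i ∈ A, (a i * b i + μ * (α - b i))
      = ∑ i ∈ A, a i * b i + μ * (#A * α - ∑ i ∈ A, b i) := by
    rw [sum_add_distrib, ← mul_sum, sum_sub_distrib, sum_const, nsmul_eq_mul]
  linarith [sum_sdiff hAS (f := fun j => a j * b j)]

theorem exists_card_le_sum_mul_le_mul_sum {S : Finset ι} {a b : ι → ℝ} {α : ℝ} {k : ℕ}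
    (ha : ∀ j ∈ S, 0 ≤ a j) (hb₀ : ∀ j ∈ S, 0 ≤ b j) (hbα : ∀ j ∈ S, b j ≤ α)
    (hsum : ∑ j ∈ S, b j ≤ k * α) :
    ∃ A ⊆ S, #A ≤ k ∧ ∑ j ∈ S, a j * b j ≤ α * ∑ i ∈ A, a i := by
  by_cases hSk : #S ≤ k
  · refine ⟨S, subset_rfl, hSk, sum_mul_le_mul_sum_of_threshold subset_rfl le_rfl (by simp) ha
      hb₀ hbα ?_⟩
    simpa using sum_le_card_nsmul S b α hbα
  obtain ⟨A, hAS, hAcard, hA⟩ := S.exists_subset_card_eq_forall_le a (m := k) (by omega)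
  refine ⟨A, hAS, hAcard.le, ?_⟩
  rw [← hAcard] at hsum
  obtain rfl | hAne := A.eq_empty_or_nonempty
  · -- any upper bound for `a` on `S` is a threshold for `A = ∅`
    exact sum_mul_le_mul_sum_of_threshold hAS (sum_nonneg ha)
      (fun j hj => single_le_sum ha (mem_sdiff.mp hj).1) (by simp) hb₀ hbα hsum
  · exact sum_mul_le_mul_sum_of_threshold hAS ((le_inf'_iff _ _).mpr fun i hi => ha i (hAS hi))
      (fun j hj => le_inf' hAne a fun i hi => hA i hi j hj) (fun i hi => inf'_le a hi)
      hb₀ hbα hsum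

end TopSubset

theorem sq_mul_le_sq_of_sqrt_mul_le {t x y : ℝ} (hx : 0 ≤ x) (h : Real.sqrt t * x ≤ y) :
    t * x ^ 2 ≤ y ^ 2 := by
  rcases le_or_gt t 0 with ht | ht
  · nlinarith [sq_nonneg x, sq_nonneg y]
  · have := pow_le_pow_left₀ (by positivity) h 2
    rwa [mul_pow, Real.sq_sqrt ht.le] at this

section L2

variable {m : ℕ}

theorem l2_nonneg (v : Fin m → ℝ) : 0 ≤ l2 v := Real.sqrt_nonneg _

theorem l2_sq (v : Fin m → ℝ) : l2 v ^ 2 = ∑ i, v i ^ 2 :=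
  Real.sq_sqrt (sum_nonneg fun i _ => sq_nonneg (v i))

theorem l2_sq_eq_dotProduct_self (v : Fin m → ℝ) : l2 v ^ 2 = v ⬝ᵥ v := by
  rw [l2_sq, dotProduct]
  simp only [sq]

theorem l2_ite_sq (T : Finset (Fin m)) (v : Fin m → ℝ) :
    l2 (fun i => if i ∈ T then v i else 0) ^ 2 = ∑ i ∈ T, v i ^ 2 := by
  simp [l2_sq, ite_pow]

theorem sparse_ite {k : ℕ} {T : Finset (Fin m)} (hT : T.card ≤ k) (v : Fin m → ℝ) :
    Sparse k (fun i => if i ∈ T then v i else 0) :=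
  ⟨T, hT, fun _ hi => if_neg hi⟩

end L2

theorem exists_sparse_sum_mul_le_dotProduct {m k : ℕ} (c x : Fin m → ℝ) (S : Finset (Fin m))
    {α : ℝ} (hx : ∀ j ∈ S, |x j| ≤ α) (hsum : ∑ j ∈ S, |x j| ≤ k * α) :
    ∃ w : Fin m → ℝ, Sparse k w ∧ (∀ i ∉ S, w i = 0) ∧ l2 w ^ 2 ≤ k * α ^ 2 ∧
      ∑ j ∈ S, c j * x j ≤ c ⬝ᵥ w := by
  obtain ⟨A, hAS, hAk, hA⟩ := exists_card_le_sum_mul_le_mul_sum (a := fun j => |c j|)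
    (fun j _ => abs_nonneg (c j)) (fun j _ => abs_nonneg (x j)) hx hsum
  refine ⟨fun i => if i ∈ A then α * SignType.sign (c i) else 0, sparse_ite hAk _,
    fun i hi => if_neg fun hiA => hi (hAS hiA), ?_, ?_⟩
  · rw [l2_ite_sq]
    calc ∑ i ∈ A, (α * SignType.sign (c i)) ^ 2 ≤ ∑ i ∈ A, α ^ 2 := by
          refine sum_le_sum fun i _ => ?_
          rw [mul_pow]
          refine mul_le_of_le_one_right (sq_nonneg α) ?_
          rcases lt_trichotomy (c i) 0 with h | h | h <;> simp [h]
      _ ≤ k * α ^ 2 := by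
          rw [sum_const, nsmul_eq_mul]
          gcongr
  · calc ∑ j ∈ S, c j * x j ≤ ∑ j ∈ S, |c j| * |x j| :=
          sum_le_sum fun j _ => (le_abs_self _).trans (abs_mul _ _).le
      _ ≤ α * ∑ i ∈ A, |c i| := hA
      _ = c ⬝ᵥ fun i => if i ∈ A then α * SignType.sign (c i) else 0 := by
          simp only [dotProduct, mul_ite, mul_zero, sum_ite_mem_eq, mul_sum]
          refine sum_congr rfl fun i _ => ?_
          rw [mul_left_comm, self_mul_sign]

theorem dotProduct_mulVec_ite_self {n p : ℕ} (Φ : Matrix (Fin n) (Fin p) ℝ) {h : Fin p → ℝ}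
    (hnull : Φ *ᵥ h = 0) (T : Finset (Fin p)) :
    Φ *ᵥ (fun i => if i ∈ T then h i else 0) ⬝ᵥ Φ *ᵥ (fun i => if i ∈ T then h i else 0)
      = ∑ j ∈ Tᶜ, -((Φ *ᵥ fun i => if i ∈ T then h i else 0) ᵥ* Φ) j * h j := by
  set hT : Fin p → ℝ := fun i => if i ∈ T then h i else 0
  set hS : Fin p → ℝ := fun i => if i ∈ Tᶜ then h i else 0
  have hsplit : hT + hS = h := by
    ext i; by_cases hi : i ∈ T <;> simp [hT, hS, hi]
  have hΦ : Φ *ᵥ hT = -(Φ *ᵥ hS) :=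
    eq_neg_of_add_eq_zero_left (by rw [← mulVec_add, hsplit, hnull])
  conv_lhs => arg 2; rw [hΦ]
  rw [dotProduct_neg, dotProduct_mulVec, dotProduct]
  simp only [hS, mul_ite, mul_zero, sum_ite_mem_eq, neg_mul, sum_neg_distrib]

theorem card_mul_sq_sum_div_card_le_sum_sq {ι : Type*} (s : Finset ι) (f : ι → ℝ) :
    s.card * ((∑ i ∈ s, f i) / s.card) ^ 2 ≤ ∑ i ∈ s, f i ^ 2 := by
  obtain rfl | hs := s.eq_empty_or_nonempty
  · simp
  rw [← le_div_iff₀' (by exact_mod_cast hs.card_pos)]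
  exact sum_div_card_sq_le_sum_sq_div_card

theorem nullspace_key_estimate_general
    {n p k : ℕ} (Φ : Matrix (Fin n) (Fin p) ℝ) (δ θ : ℝ)
    (hθ0 : 0 ≤ θ)
    (hδ : ∀ c : Fin p → ℝ, Sparse k c →
      Real.sqrt (1 - δ) * l2 c ≤ l2 (Φ.mulVec c) ∧
      l2 (Φ.mulVec c) ≤ Real.sqrt (1 + δ) * l2 c)
    (hθ : ∀ c c' : Fin p → ℝ, Sparse k c → Sparse k c' → (∀ i, c i = 0 ∨ c' i = 0) →
      |dotProduct (Φ.mulVec c) (Φ.mulVec c')| ≤ θ * l2 c * l2 c')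
    (h : Fin p → ℝ) (hnull : Φ.mulVec h = 0)
    (T : Finset (Fin p)) (hTcard : T.card = k)
    (hlarge : ∀ i ∈ T, ∀ j ∉ T, |h j| ≤ |h i|)
    (hcone : ∑ i ∈ Tᶜ, |h i| ≤ ∑ i ∈ T, |h i|) :
    (1 - δ) * (l2 (fun i => if i ∈ T then h i else 0))^2
      ≤ θ * (l2 (fun i => if i ∈ T then h i else 0))^2 := by
  set hT : Fin p → ℝ := fun i => if i ∈ T then h i else 0
  obtain rfl | hTne := T.eq_empty_or_nonempty
  · simp [hT, l2]
  set α := (∑ i ∈ T, |h i|) / k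
  have hkα : k * α = ∑ i ∈ T, |h i| :=
    mul_div_cancel₀ _ (by rw [← hTcard]; exact_mod_cast hTne.card_pos.ne')
  have hα : ∀ j ∈ Tᶜ, |h j| ≤ α := fun j hj => by
    simpa [expect_eq_sum_div_card, hTcard] using
      le_expect hTne fun i hi => hlarge i hi j (mem_compl.mp hj)
  obtain ⟨w, hw_sparse, hw_supp, hw_sq, hdot⟩ :=
    exists_sparse_sum_mul_le_dotProduct (-((Φ *ᵥ hT) ᵥ* Φ)) h Tᶜ hα (hkα ▸ hcone)
  have hwl2 : l2 w ≤ l2 hT := by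
    refine (pow_le_pow_iff_left₀ (l2_nonneg _) (l2_nonneg _) two_ne_zero).mp (hw_sq.trans ?_)
    simpa [hT, α, l2_ite_sq, hTcard] using card_mul_sq_sum_div_card_le_sum_sq T fun i => |h i|
  have hdisj : ∀ i, hT i = 0 ∨ w i = 0 := fun i => by
    by_cases hi : i ∈ T
    · exact Or.inr (hw_supp i (notMem_compl.mpr hi))
    · exact Or.inl (if_neg hi)
  calc (1 - δ) * l2 hT ^ 2 ≤ l2 (Φ *ᵥ hT) ^ 2 :=
        sq_mul_le_sq_of_sqrt_mul_le (l2_nonneg _) (hδ hT (sparse_ite hTcard.le h)).1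
    _ = ∑ j ∈ Tᶜ, -((Φ *ᵥ hT) ᵥ* Φ) j * h j := by
        rw [l2_sq_eq_dotProduct_self, dotProduct_mulVec_ite_self Φ hnull T]
    _ ≤ -((Φ *ᵥ hT) ᵥ* Φ) ⬝ᵥ w := hdot
    _ = -(Φ *ᵥ hT ⬝ᵥ Φ *ᵥ w) := by rw [neg_dotProduct, dotProduct_mulVec]
    _ ≤ |Φ *ᵥ hT ⬝ᵥ Φ *ᵥ w| := neg_le_abs _
    _ ≤ θ * l2 hT * l2 w := hθ hT w (sparse_ite hTcard.le h) hw_sparse hdisj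
    _ ≤ θ * l2 hT * l2 hT := mul_le_mul_of_nonneg_left hwl2 (mul_nonneg hθ0 (l2_nonneg _))
    _ = θ * l2 hT ^ 2 := by ring

/-- Key estimate: for `h` in the null space of `Φ` satisfying the cone condition on
the set `T` of the `k` largest-magnitude entries, `(1-δ_k)‖h_T‖₂² ≤ θ_{k,k}‖h_T‖₂²`. -/
theorem nullspace_key_estimate
    {n p k : ℕ} (Φ : Matrix (Fin n) (Fin p) ℝ) (δ θ : ℝ)
    (hδ0 : 0 ≤ δ) (hθ0 : 0 ≤ θ)
    (hδ : ∀ c : Fin p → ℝ, Sparse k c →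
      Real.sqrt (1 - δ) * l2 c ≤ l2 (Φ.mulVec c) ∧
      l2 (Φ.mulVec c) ≤ Real.sqrt (1 + δ) * l2 c)
    (hθ : ∀ c c' : Fin p → ℝ, Sparse k c → Sparse k c' → (∀ i, c i = 0 ∨ c' i = 0) →
      |dotProduct (Φ.mulVec c) (Φ.mulVec c')| ≤ θ * l2 c * l2 c')
    (h : Fin p → ℝ) (hnull : Φ.mulVec h = 0)
    (T : Finset (Fin p)) (hTcard : T.card = k)
    (hlarge : ∀ i ∈ T, ∀ j ∉ T, |h j| ≤ |h i|)
    (hcone : ∑ i ∈ Tᶜ, |h i| ≤ ∑ i ∈ T, |h i|) :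
    (1 - δ) * (l2 (fun i => if i ∈ T then h i else 0))^2
      ≤ θ * (l2 (fun i => if i ∈ T then h i else 0))^2 :=
  nullspace_key_estimate_general Φ δ θ hθ0 hδ hθ h hnull T hTcard hlarge hcone
end
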